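/- For every finite n ≥ 2, the disjoint union B_n of n copies of (ℚ, <), i.e., Fin n × ℚ ordered by (i, q) ≤ (j, r) iff i = j and q ≤ r, is not MĒ-homogeneous: there exists an injective <-preserving map between finite subsets of B_n which has no extension to a surjective ≤-preserving map B_n → B_n. -/

import Mathlib

/-- The order on the disjoint union `Fin n × ℚ` of `n` copies of `ℚ`:
`(i, q) ≤ (j, r)` iff `i = j` and `q ≤ r`. -/
def Dle {n : ℕ} (x y : Fin n × ℚ) : Prop := x.1 = y.1 ∧ x.2 ≤ y.2

/-- The strict order: `(i, q) < (j, r)` iff `i = j` and `q < r`. -/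
def Dlt {n : ℕ} (x y : Fin n × ℚ) : Prop := x.1 = y.1 ∧ x.2 < y.2

/-!
A `≤`-preserving map of `B_n` cannot move a point out of its copy of `ℚ`, since any two points
of one copy are comparable; so it induces a map on the `n` indices of the copies. If the map is
surjective, so is the induced map, which is then injective because there are finitely many
copies. Hence no surjective `≤`-preserving map can send `(i, 0)` and `(j, 0)`, for `i ≠ j`,
into one copy, although the (vacuously `<`-preserving) partial map `(i, 0) ↦ (i, 0)`,
`(j, 0) ↦ (i, 1)` does so.
-/

section DlePreserving

variable {n : ℕ} {g : Fin n × ℚ → Fin n × ℚ}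

theorem fst_eq_of_dle_preserving (hg : ∀ x y, Dle x y → Dle (g x) (g y)) (i : Fin n) (q r : ℚ) :
    (g (i, q)).1 = (g (i, r)).1 := by
  rcases le_total q r with h | h
  · exact (hg (i, q) (i, r) ⟨rfl, h⟩).1
  · exact (hg (i, r) (i, q) ⟨rfl, h⟩).1.symm

theorem surjective_fst_comp_of_dle_preserving (hs : Function.Surjective g)
    (hg : ∀ x y, Dle x y → Dle (g x) (g y)) : Function.Surjective fun i => (g (i, 0)).1 := by
  intro j
  obtain ⟨x, hx⟩ := hs (j, 0)
  refine ⟨x.1, ?_⟩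
  show (g (x.1, 0)).1 = j
  rw [fst_eq_of_dle_preserving hg x.1 0 x.2, Prod.mk.eta, hx]

theorem fst_ne_of_dle_preserving (hs : Function.Surjective g)
    (hg : ∀ x y, Dle x y → Dle (g x) (g y)) {i j : Fin n} (hij : i ≠ j) (q r : ℚ) :
    (g (i, q)).1 ≠ (g (j, r)).1 := by
  have hinj : Function.Injective fun i => (g (i, 0)).1 :=
    Finite.injective_iff_surjective.mpr (surjective_fst_comp_of_dle_preserving hs hg)
  rw [fst_eq_of_dle_preserving hg i q 0, fst_eq_of_dle_preserving hg j r 0]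
  exact fun h => hij (hinj h)

end DlePreserving

/-- For finite `n ≥ 2`, the disjoint union `B_n = Fin n × ℚ` of `n` copies of `(ℚ, <)`
is not MĒ-homogeneous: some injective `<`-preserving map between finite subsets
has no extension to a surjective ≤-preserving map `B_n → B_n`. -/
theorem Bn_not_MEbar (n : ℕ) (hn : 2 ≤ n) :
    ∃ (A : Finset (Fin n × ℚ)) (f : Fin n × ℚ → Fin n × ℚ), Set.InjOn f ↑A ∧
      (∀ a₁ ∈ A, ∀ a₂ ∈ A, Dlt a₁ a₂ → Dlt (f a₁) (f a₂)) ∧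
      ¬ ∃ g : Fin n × ℚ → Fin n × ℚ, Function.Surjective g ∧
          (∀ x y, Dle x y → Dle (g x) (g y)) ∧ ∀ a ∈ A, g a = f a := by
  have : Nontrivial (Fin n) := Fin.nontrivial_iff_two_le.mpr hn
  obtain ⟨i, j, hij⟩ := exists_pair_ne (Fin n)
  set f : Fin n × ℚ → Fin n × ℚ := fun x => (i, if x.1 = i then 0 else 1) with hf
  have hfi : f (i, 0) = (i, 0) := by simp [hf]
  have hfj : f (j, 0) = (i, 1) := by simp [hf, hij.symm]
  refine ⟨{(i, 0), (j, 0)}, f, ?_, ?_, ?_⟩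
  · have hne : (i, (0 : ℚ)) ≠ (j, 0) := by simp [hij]
    simp [Set.injOn_insert, hne, hfi, hfj]
  · intro a₁ h₁ a₂ h₂ hlt
    have hsnd : ∀ a ∈ ({(i, 0), (j, 0)} : Finset (Fin n × ℚ)), a.2 = 0 := by simp
    exact absurd hlt.2 (by rw [hsnd a₁ h₁, hsnd a₂ h₂]; exact lt_irrefl 0)
  · rintro ⟨g, hs, hg, hext⟩
    apply fst_ne_of_dle_preserving hs hg hij 0 0
    rw [hext _ (by simp), hext _ (by simp), hfi, hfj]
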